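/- arXiv:2406.11544 — 3 statements merged into one kernel-verified Lean document; each statement's English description precedes it below -/
import Mathlib

section
/- Let H be a symmetric positive definite d×d real matrix with eigenvalues σ_1, …, σ_d, let w* ∈ ℝ^d, and let λ > 0, μ ∈ [0,1), S > 0, L* > 0, α ≥ 0 be real numbers with c := λ/(1+μ) satisfying 2 − c(σ_i + α) > 0 for every i. Define Σ := (2λL*/(S(1−μ))) · H (H + αI_d)^{−1} (2I_d − c(H + αI_d))^{−1}, the Gaussian density p(w) := (2π)^{−d/2} (det Σ)^{−1/2} exp( −½ (w − w*)ᵀ Σ^{−1} (w − w*) ), the quadratic loss L(w) := L* + ½ (w − w*)ᵀ H (w − w*), and the gradient g(w) := H(w − w*). Then for every w ∈ ℝ^d: ln p(w) = −(d/2)ln(2π) − (d/2)ln( 2λ/(S(1−μ)) ) − (d/2)·ln L* + ½ Σ_{i=1}^d ln( (2 − c(σ_i + α))(σ_i + α) / σ_i ) − (S(1−μ)/(2λ))·(1 − cα)·‖w − w*‖²/L* − (S(1−μ)α/(4λ))·(2 − cα)·( g(w)ᵀ H^{−3} g(w) )/L* + (S(1−μ)/(2(1+μ)))·( L(w) − L*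 )/L*. -/
/-!
With `A = H + α` and `B = 2 - c A`, the covariance is `Σ = k H A⁻¹ B⁻¹`, a rational function of
`H`. Hence `Σ⁻¹ = k⁻¹ B A H⁻¹ = k⁻¹ ((2 - 2cα) + (2α - cα²) H⁻¹ - c H)`, which splits the
Gaussian exponent into multiples of `‖w - w*‖²`, `(w - w*)ᵀ H⁻¹ (w - w*) = gᵀ H⁻³ g` and
`(w - w*)ᵀ H (w - w*) = 2 (L - L*)`; and `det Σ` is computed in an eigenbasis of `H`, where it is
`k^d ∏ σᵢ / ((σᵢ + α) (2 - c (σᵢ + α)))`.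
-/

open Matrix

section

variable {n : Type*} [Fintype n] [DecidableEq n]

/-- The stationary SGD covariance, with the scalar prefactor `k = 2λL*/(S(1-μ))` kept abstract. -/
noncomputable def sgdCovariance {K : Type*} [Field K] (k c α : K) (H : Matrix n n K) :
    Matrix n n K :=
  k • (H * (H + α • 1)⁻¹ * ((2 : K) • 1 - c • (H + α • 1))⁻¹)

theorem Matrix.IsHermitian.det_smul_one_add_smul {H : Matrix n n ℝ} (hH : H.IsHermitian)
    (a b : ℝ) : (a • 1 + b • H).det = ∏ i, (a + b * hH.eigenvalues i) := by
  set U : Matrix n n ℝ := (hH.eigenvectorUnitary : Matrix n n ℝ)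
  have hU : U * star U = 1 := Unitary.mul_star_self_of_mem hH.eigenvectorUnitary.2
  have hH' : H = U * diagonal hH.eigenvalues * star U := by simpa using hH.spectral_theorem
  have hconj : a • 1 + b • H = U * diagonal (fun i ↦ a + b * hH.eigenvalues i) * star U := by
    have hD : diagonal (fun i ↦ a + b * hH.eigenvalues i) =
        a • 1 + b • diagonal hH.eigenvalues := by
      ext i j
      by_cases h : i = j <;> simp [h]
    conv_lhs => rw [hH']
    simp only [hD, Matrix.mul_add, Matrix.add_mul, Matrix.mul_smul, Matrix.smul_mul, mul_one, hU]
  rw [hconj, det_mul, det_mul, mul_right_comm, ← det_mul, hU, det_one, one_mul, det_diagonal]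

theorem Matrix.IsHermitian.det_add_smul_one {H : Matrix n n ℝ} (hH : H.IsHermitian) (α : ℝ) :
    (H + α • 1).det = ∏ i, (hH.eigenvalues i + α) := by
  simpa [add_comm] using hH.det_smul_one_add_smul α 1

theorem Matrix.IsHermitian.det_smul_one_sub_smul_add_smul_one {H : Matrix n n ℝ}
    (hH : H.IsHermitian) (a c α : ℝ) :
    (a • 1 - c • (H + α • 1)).det = ∏ i, (a - c * (hH.eigenvalues i + α)) := by
  have h := hH.det_smul_one_add_smul (a - c * α) (-c)
  convert h using 3 with i
  · module
  · ring

theorem Matrix.IsHermitian.det_sgdCovariance {H : Matrix n n ℝ} (hH : H.IsHermitian)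
    (k c α : ℝ) :
    (sgdCovariance k c α H).det = k ^ Fintype.card n *
      ∏ i, ((2 - c * (hH.eigenvalues i + α)) * (hH.eigenvalues i + α) / hH.eigenvalues i)⁻¹ := by
  rw [sgdCovariance, det_smul, det_mul, det_mul, det_nonsing_inv, det_nonsing_inv,
    Ring.inverse_eq_inv, Ring.inverse_eq_inv, hH.det_add_smul_one,
    hH.det_smul_one_sub_smul_add_smul_one, hH.det_eq_prod_eigenvalues, RCLike.ofReal_real_eq_id]
  simp only [id_eq, Finset.prod_inv_distrib, Finset.prod_div_distrib, Finset.prod_mul_distrib]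
  field_simp

theorem Matrix.IsHermitian.log_det_sgdCovariance {H : Matrix n n ℝ} (hH : H.IsHermitian)
    {k : ℝ} (c α : ℝ) (hk : k ≠ 0)
    (hr : ∀ i, (2 - c * (hH.eigenvalues i + α)) * (hH.eigenvalues i + α) / hH.eigenvalues i ≠ 0) :
    Real.log (sgdCovariance k c α H).det = Fintype.card n * Real.log k -
      ∑ i, Real.log ((2 - c * (hH.eigenvalues i + α)) * (hH.eigenvalues i + α) /
        hH.eigenvalues i) := by
  rw [hH.det_sgdCovariance, Real.log_mul (pow_ne_zero _ hk)
    (Finset.prod_ne_zero_iff.2 fun i _ ↦ inv_ne_zero (hr i)), Real.log_pow,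
    Real.log_prod fun i _ ↦ inv_ne_zero (hr i)]
  simp only [Real.log_inv, Finset.sum_neg_distrib, sub_eq_add_neg]

theorem inv_sgdCovariance {K : Type*} [Field K] {H : Matrix n n K} {k : K} {c α : K}
    (hk : k ≠ 0) (hdet : (sgdCovariance k c α H).det ≠ 0) :
    (sgdCovariance k c α H)⁻¹ =
      k⁻¹ • ((2 - 2 * c * α) • 1 + (2 * α - c * α ^ 2) • H⁻¹ - c • H) := by
  have hprod : IsUnit (H * (H + α • 1)⁻¹ * ((2 : K) • 1 - c • (H + α • 1))⁻¹).det :=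
    isUnit_iff_ne_zero.2 (right_ne_zero_of_mul (by rwa [sgdCovariance, det_smul] at hdet))
  -- `A⁻¹ = 0` for singular `A`, so `det Σ ≠ 0` forces `H`, `A`, `B` to be invertible
  obtain ⟨⟨hH, hA⟩, hB⟩ : (IsUnit H.det ∧ IsUnit (H + α • 1).det) ∧
      IsUnit ((2 : K) • 1 - c • (H + α • 1)).det := by
    simpa only [det_mul, IsUnit.mul_iff, isUnit_nonsing_inv_det_iff] using hprod
  have : Invertible k := invertibleOfNonzero hk
  rw [sgdCovariance, Matrix.inv_smul _ k hprod, invOf_eq_inv, Matrix.mul_inv_rev,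
    Matrix.mul_inv_rev, nonsing_inv_nonsing_inv _ hA, nonsing_inv_nonsing_inv _ hB]
  congr 1
  simp only [Matrix.sub_mul, Matrix.add_mul, Matrix.mul_add, Matrix.smul_mul, Matrix.mul_smul,
    one_mul, mul_one, mul_assoc, mul_nonsing_inv _ hH]
  module

theorem Matrix.IsSymm.mulVec_dotProduct_inv_pow_three_mulVec_mulVec {R : Type*} [CommRing R]
    {H : Matrix n n R} (hH : H.IsSymm) (hdet : IsUnit H.det) (v : n → R) :
    H *ᵥ v ⬝ᵥ (H⁻¹ ^ 3 *ᵥ (H *ᵥ v)) = v ⬝ᵥ (H⁻¹ *ᵥ v) := by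
  have hconj : H * H⁻¹ ^ 3 * H = H⁻¹ := by
    rw [pow_succ, pow_two, ← mul_assoc, ← mul_assoc, mul_nonsing_inv _ hdet, one_mul,
      mul_assoc, nonsing_inv_mul _ hdet, mul_one]
  calc H *ᵥ v ⬝ᵥ (H⁻¹ ^ 3 *ᵥ (H *ᵥ v)) = v ⬝ᵥ (H *ᵥ (H⁻¹ ^ 3 *ᵥ (H *ᵥ v))) := by
        rw [dotProduct_mulVec v H, ← mulVec_transpose, hH.eq]
    _ = v ⬝ᵥ (H⁻¹ *ᵥ v) := by rw [mulVec_mulVec, mulVec_mulVec, hconj]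

end

theorem Real.log_rpow_mul_rpow_mul_exp {a b : ℝ} (ha : 0 < a) (hb : 0 < b) (x y z : ℝ) :
    Real.log (a ^ x * b ^ y * Real.exp z) = x * Real.log a + y * Real.log b + z := by
  rw [Real.log_mul (by positivity) (Real.exp_pos z).ne', Real.log_mul (by positivity)
    (by positivity), Real.log_rpow ha, Real.log_rpow hb, Real.log_exp]

theorem stmt_6_general {d : ℕ} (H : Matrix (Fin d) (Fin d) ℝ)
    (hH : H.IsHermitian) (hPD : H.PosDef)
    (wstar : Fin d → ℝ)
    (lam μ S Lstar α : ℝ) (hlam : 0 < lam) (hμ1 : μ < 1)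
    (hS : 0 < S) (hLstar : 0 < Lstar) (hα : 0 ≤ α)
    (c : ℝ) (hc : c = lam / (1 + μ))
    (hgap : ∀ i : Fin d, 0 < 2 - c * (hH.eigenvalues i + α))
    (Sgm : Matrix (Fin d) (Fin d) ℝ)
    (hSgm : Sgm = (2 * lam * Lstar / (S * (1 - μ))) •
      (H * (H + α • (1 : Matrix (Fin d) (Fin d) ℝ))⁻¹ *
        ((2 : ℝ) • (1 : Matrix (Fin d) (Fin d) ℝ) -
          c • (H + α • (1 : Matrix (Fin d) (Fin d) ℝ)))⁻¹))
    (p : (Fin d → ℝ) → ℝ)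
    (hp : ∀ w, p w = (2 * Real.pi) ^ (-(d : ℝ) / 2) * Sgm.det ^ (-(1 : ℝ) / 2) *
      Real.exp (-(1 / 2) * ((w - wstar) ⬝ᵥ Sgm⁻¹ *ᵥ (w - wstar))))
    (Lfun : (Fin d → ℝ) → ℝ)
    (hLfun : ∀ w, Lfun w = Lstar + (1 / 2) * ((w - wstar) ⬝ᵥ H *ᵥ (w - wstar)))
    (g : (Fin d → ℝ) → (Fin d → ℝ))
    (hg : ∀ w, g w = H *ᵥ (w - wstar)) :
    ∀ w : Fin d → ℝ,
      Real.log (p w) =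
        -((d : ℝ) / 2) * Real.log (2 * Real.pi)
        - ((d : ℝ) / 2) * Real.log (2 * lam / (S * (1 - μ)))
        - ((d : ℝ) / 2) * Real.log Lstar
        + (1 / 2) * ∑ i : Fin d, Real.log
            ((2 - c * (hH.eigenvalues i + α)) * (hH.eigenvalues i + α) / hH.eigenvalues i)
        - (S * (1 - μ) / (2 * lam)) * (1 - c * α) *
            ((w - wstar) ⬝ᵥ (w - wstar)) / Lstar
        - (S * (1 - μ) * α / (4 * lam)) * (2 - c * α) *
            ((g w) ⬝ᵥ (H⁻¹ ^ 3) *ᵥ (g w)) / Lstar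
        + (S * (1 - μ) / (2 * (1 + μ))) * ((Lfun w - Lstar) / Lstar) := by
  intro w
  have hμ : 0 < 1 - μ := by linarith
  have hk : 0 < 2 * lam * Lstar / (S * (1 - μ)) := by positivity
  have hσ : ∀ i, 0 < hH.eigenvalues i := hPD.eigenvalues_pos
  have hσα : ∀ i, 0 < hH.eigenvalues i + α := fun i ↦ by linarith [hσ i]
  have hr : ∀ i, 0 < (2 - c * (hH.eigenvalues i + α)) * (hH.eigenvalues i + α) /
      hH.eigenvalues i := fun i ↦ div_pos (mul_pos (hgap i) (hσα i)) (hσ i)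
  replace hSgm : Sgm = sgdCovariance (2 * lam * Lstar / (S * (1 - μ))) c α H := hSgm
  have hdet : 0 < Sgm.det := by
    rw [hSgm, hH.det_sgdCovariance]
    exact mul_pos (pow_pos hk _) (Finset.prod_pos fun i _ ↦ inv_pos.2 (hr i))
  have hlogk : Real.log (2 * lam * Lstar / (S * (1 - μ))) =
      Real.log (2 * lam / (S * (1 - μ))) + Real.log Lstar := by
    rw [← Real.log_mul (by positivity) hLstar.ne', mul_div_right_comm]
  rw [hp, Real.log_rpow_mul_rpow_mul_exp (by positivity) hdet, hSgm,
    hH.log_det_sgdCovariance c α hk.ne' fun i ↦ (hr i).ne', hlogk,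
    inv_sgdCovariance hk.ne' (hSgm ▸ hdet.ne'), hg,
    (isHermitian_iff_isSymm.1 hH).mulVec_dotProduct_inv_pow_three_mulVec_mulVec
      hPD.det_pos.ne'.isUnit, hLfun]
  simp only [smul_mulVec, add_mulVec, sub_mulVec, one_mulVec, dotProduct_add, dotProduct_sub,
    dotProduct_smul, smul_eq_mul, Fintype.card_fin]
  subst hc
  field_simp
  ring

/-- Exact form of the log-posterior of model parameters trained with SGD
(learning rate λ, momentum μ, batch size S, ℓ2-regularization α) converging to
a local minimum w* with Hessian H and loss value L*: under the Laplace
approximation the posterior is the Gaussian N(w*, Σ) with Σ the stationary SGD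
fluctuation covariance. -/
theorem stmt_6 {d : ℕ} (H : Matrix (Fin d) (Fin d) ℝ)
    (hH : H.IsHermitian) (hPD : H.PosDef)
    (wstar : Fin d → ℝ)
    (lam μ S Lstar α : ℝ) (hlam : 0 < lam) (hμ0 : 0 ≤ μ) (hμ1 : μ < 1)
    (hS : 0 < S) (hLstar : 0 < Lstar) (hα : 0 ≤ α)
    (c : ℝ) (hc : c = lam / (1 + μ))
    (hgap : ∀ i : Fin d, 0 < 2 - c * (hH.eigenvalues i + α))
    (Sgm : Matrix (Fin d) (Fin d) ℝ)
    (hSgm : Sgm = (2 * lam * Lstar / (S * (1 - μ))) •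
      (H * (H + α • (1 : Matrix (Fin d) (Fin d) ℝ))⁻¹ *
        ((2 : ℝ) • (1 : Matrix (Fin d) (Fin d) ℝ) -
          c • (H + α • (1 : Matrix (Fin d) (Fin d) ℝ)))⁻¹))
    (p : (Fin d → ℝ) → ℝ)
    (hp : ∀ w, p w = (2 * Real.pi) ^ (-(d : ℝ) / 2) * Sgm.det ^ (-(1 : ℝ) / 2) *
      Real.exp (-(1 / 2) * ((w - wstar) ⬝ᵥ Sgm⁻¹ *ᵥ (w - wstar))))
    (Lfun : (Fin d → ℝ) → ℝ)
    (hLfun : ∀ w, Lfun w = Lstar + (1 / 2) * ((w - wstar) ⬝ᵥ H *ᵥ (w - wstar)))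
    (g : (Fin d → ℝ) → (Fin d → ℝ))
    (hg : ∀ w, g w = H *ᵥ (w - wstar)) :
    ∀ w : Fin d → ℝ,
      Real.log (p w) =
        -((d : ℝ) / 2) * Real.log (2 * Real.pi)
        - ((d : ℝ) / 2) * Real.log (2 * lam / (S * (1 - μ)))
        - ((d : ℝ) / 2) * Real.log Lstar
        + (1 / 2) * ∑ i : Fin d, Real.log
            ((2 - c * (hH.eigenvalues i + α)) * (hH.eigenvalues i + α) / hH.eigenvalues i)
        - (S * (1 - μ) / (2 * lam)) * (1 - c * α) *
            ((w - wstar) ⬝ᵥ (w - wstar)) / Lstar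
        - (S * (1 - μ) * α / (4 * lam)) * (2 - c * α) *
            ((g w) ⬝ᵥ (H⁻¹ ^ 3) *ᵥ (g w)) / Lstar
        + (S * (1 - μ) / (2 * (1 + μ))) * ((Lfun w - Lstar) / Lstar) :=
  stmt_6_general H hH hPD wstar lam μ S Lstar α hlam hμ1 hS hLstar hα c hc hgap Sgm hSgm p hp Lfun
    hLfun g hg
end

section
/- Let H be a symmetric invertible d×d real matrix, g_0, g ∈ ℝ^d, and let n > 0, λ > 0, μ ∈ [0,1), S > 0, L* > 0, α ≥ 0, ℓ ∈ ℝ be real numbers with c := λ/(1+μ). Set g_1 := g_0 + g/n and v_i := H^{−1} g_i for i ∈ {0,1}, let L_0 ∈ ℝ and L_1 := L_0 + ℓ/n, and define for i ∈ {0,1}: F_i := −(S(1−μ)(1 − cα)/(2λL*))·‖v_i‖² − (S(1−μ)α(2 − cα)/(4λL*))·g_iᵀ H^{−3} g_i + (S(1−μ)/(2(1+μ)L*))·L_i. Define I_1 := (1/n)(1 − cα)·‖H^{−1}g‖², I_2 := 2(1 − cα)·(H^{−1}g_0)ᵀ(H^{−1}g), I_3 := (α/(2n))(2 − cα)·(H^{−1}g)ᵀ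 H^{−1} (H^{−1}g), and I_4 := α(2 − cα)·(H^{−1}g_0)ᵀ H^{−1} (H^{−1}g). Then F_1 − F_0 = (S(1−μ)/(2nL*)) · ( ℓ/(1+μ) − (1/λ)(I_1 + I_2 + I_3 + I_4) ). -/
open Matrix

/-!
Write `P := H⁻¹`, which is symmetric, `u := P g` and `t := 1/n`. Then `v₁ = v₀ + t u` and
`g₁ᵀ P³ g₁ = v₁ᵀ P v₁`, so both quadratic terms of `F₁` expand as
`b(v₀, v₀) + 2t b(v₀, u) + t² b(u, u)`
for the forms `b(x, y) = xᵀ y` and `b(x, y) = xᵀ P y`. The `b(v₀, v₀)` parts cancel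
against `F₀` and the remaining terms are `I₁, …, I₄` up to the common factor.
-/

namespace Matrix

variable {n R : Type*} [Fintype n] [CommRing R]

theorem IsSymm.dotProduct_mulVec_comm {A : Matrix n n R} (hA : A.IsSymm) (x y : n → R) :
    x ⬝ᵥ A *ᵥ y = A *ᵥ x ⬝ᵥ y := by
  rw [dotProduct_comm (A *ᵥ x), ← dotProduct_transpose_mulVec A x y, hA.eq]

theorem IsSymm.dotProduct_mulVec_add_smul {A : Matrix n n R} (hA : A.IsSymm) (x y : n → R)
    (t : R) :
    (x + t • y) ⬝ᵥ A *ᵥ (x + t • y) =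
      x ⬝ᵥ A *ᵥ x + 2 * t * (x ⬝ᵥ A *ᵥ y) + t ^ 2 * (y ⬝ᵥ A *ᵥ y) := by
  have hyx : y ⬝ᵥ A *ᵥ x = x ⬝ᵥ A *ᵥ y := by
    rw [hA.dotProduct_mulVec_comm, dotProduct_comm]
  simp only [mulVec_add, mulVec_smul, dotProduct_add, add_dotProduct, dotProduct_smul,
    smul_dotProduct, smul_eq_mul, hyx]
  ring

theorem dotProduct_add_smul_self (x y : n → R) (t : R) :
    (x + t • y) ⬝ᵥ (x + t • y) = x ⬝ᵥ x + 2 * t * (x ⬝ᵥ y) + t ^ 2 * (y ⬝ᵥ y) := by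
  classical
  simpa only [one_mulVec] using isSymm_one.dotProduct_mulVec_add_smul x y t

theorem IsSymm.dotProduct_pow_three_mulVec {A : Matrix n n R} [DecidableEq n] (hA : A.IsSymm)
    (x y : n → R) : x ⬝ᵥ (A ^ 3) *ᵥ y = A *ᵥ x ⬝ᵥ A *ᵥ (A *ᵥ y) := by
  rw [pow_three, ← mulVec_mulVec, ← mulVec_mulVec, hA.dotProduct_mulVec_comm]

end Matrix

theorem stmt_7_general {d : ℕ} (H : Matrix (Fin d) (Fin d) ℝ)
    (hHsymm : H.IsHermitian)
    (g0 g : Fin d → ℝ)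
    (n lam μ S Lstar α ℓ : ℝ)
    (c : ℝ)
    (g1 : Fin d → ℝ) (hg1 : g1 = g0 + (1 / n) • g)
    (v0 v1 : Fin d → ℝ) (hv0 : v0 = H⁻¹ *ᵥ g0) (hv1 : v1 = H⁻¹ *ᵥ g1)
    (L0 L1 : ℝ) (hL1 : L1 = L0 + ℓ / n)
    (F0 F1 : ℝ)
    (hF0 : F0 = -(S * (1 - μ) * (1 - c * α) / (2 * lam * Lstar)) * (v0 ⬝ᵥ v0)
      - (S * (1 - μ) * α * (2 - c * α) / (4 * lam * Lstar)) * (g0 ⬝ᵥ (H⁻¹ ^ 3) *ᵥ g0)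
      + (S * (1 - μ) / (2 * (1 + μ) * Lstar)) * L0)
    (hF1 : F1 = -(S * (1 - μ) * (1 - c * α) / (2 * lam * Lstar)) * (v1 ⬝ᵥ v1)
      - (S * (1 - μ) * α * (2 - c * α) / (4 * lam * Lstar)) * (g1 ⬝ᵥ (H⁻¹ ^ 3) *ᵥ g1)
      + (S * (1 - μ) / (2 * (1 + μ) * Lstar)) * L1)
    (I1 I2 I3 I4 : ℝ)
    (hI1 : I1 = (1 / n) * (1 - c * α) * ((H⁻¹ *ᵥ g) ⬝ᵥ (H⁻¹ *ᵥ g)))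
    (hI2 : I2 = 2 * (1 - c * α) * ((H⁻¹ *ᵥ g0) ⬝ᵥ (H⁻¹ *ᵥ g)))
    (hI3 : I3 = (α / (2 * n)) * (2 - c * α) * ((H⁻¹ *ᵥ g) ⬝ᵥ H⁻¹ *ᵥ (H⁻¹ *ᵥ g)))
    (hI4 : I4 = α * (2 - c * α) * ((H⁻¹ *ᵥ g0) ⬝ᵥ H⁻¹ *ᵥ (H⁻¹ *ᵥ g))) :
    F1 - F0 = (S * (1 - μ) / (2 * n * Lstar)) *
      (ℓ / (1 + μ) - (1 / lam) * (I1 + I2 + I3 + I4)) := by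
  have hP : (H⁻¹).IsSymm := (isHermitian_iff_isSymm.mp hHsymm).inv
  have hv1' : v1 = v0 + (1 / n) • H⁻¹ *ᵥ g := by
    rw [hv1, hg1, mulVec_add, mulVec_smul, hv0]
  have hcube0 : g0 ⬝ᵥ (H⁻¹ ^ 3) *ᵥ g0 = v0 ⬝ᵥ H⁻¹ *ᵥ v0 := by
    rw [hP.dotProduct_pow_three_mulVec, hv0]
  have hcube1 : g1 ⬝ᵥ (H⁻¹ ^ 3) *ᵥ g1 = v1 ⬝ᵥ H⁻¹ *ᵥ v1 := by
    rw [hP.dotProduct_pow_three_mulVec, hv1]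
  rw [hF1, hF0, hcube0, hcube1, hv1', dotProduct_add_smul_self, hP.dotProduct_mulVec_add_smul,
    hI1, hI2, hI3, hI4, hL1, hv0]
  -- `ring` treats `(2 * (1 + μ) * Lstar)⁻¹` as an atom unless it is split first.
  simp only [div_eq_mul_inv, mul_inv]
  ring

/-- Core algebraic identity behind the optimal membership-inference score for
SGD: the difference of the non-constant parts of the log-posterior densities of
SGD-trained parameters with and without a target record equals
(S(1−μ)/(2nL*))·(ℓ/(1+μ) − (1/λ)(I₁ + I₂ + I₃ + I₄)). -/
theorem stmt_7 {d : ℕ} (H : Matrix (Fin d) (Fin d) ℝ)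
    (hHsymm : H.IsHermitian) (hH : IsUnit H)
    (g0 g : Fin d → ℝ)
    (n lam μ S Lstar α ℓ : ℝ)
    (hn : 0 < n) (hlam : 0 < lam) (hμ0 : 0 ≤ μ) (hμ1 : μ < 1)
    (hS : 0 < S) (hL : 0 < Lstar) (hα : 0 ≤ α)
    (c : ℝ) (hc : c = lam / (1 + μ))
    (g1 : Fin d → ℝ) (hg1 : g1 = g0 + (1 / n) • g)
    (v0 v1 : Fin d → ℝ) (hv0 : v0 = H⁻¹ *ᵥ g0) (hv1 : v1 = H⁻¹ *ᵥ g1)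
    (L0 L1 : ℝ) (hL1 : L1 = L0 + ℓ / n)
    (F0 F1 : ℝ)
    (hF0 : F0 = -(S * (1 - μ) * (1 - c * α) / (2 * lam * Lstar)) * (v0 ⬝ᵥ v0)
      - (S * (1 - μ) * α * (2 - c * α) / (4 * lam * Lstar)) * (g0 ⬝ᵥ (H⁻¹ ^ 3) *ᵥ g0)
      + (S * (1 - μ) / (2 * (1 + μ) * Lstar)) * L0)
    (hF1 : F1 = -(S * (1 - μ) * (1 - c * α) / (2 * lam * Lstar)) * (v1 ⬝ᵥ v1)
      - (S * (1 - μ) * α * (2 - c * α) / (4 * lam * Lstar)) * (g1 ⬝ᵥ (H⁻¹ ^ 3) *ᵥ g1)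
      + (S * (1 - μ) / (2 * (1 + μ) * Lstar)) * L1)
    (I1 I2 I3 I4 : ℝ)
    (hI1 : I1 = (1 / n) * (1 - c * α) * ((H⁻¹ *ᵥ g) ⬝ᵥ (H⁻¹ *ᵥ g)))
    (hI2 : I2 = 2 * (1 - c * α) * ((H⁻¹ *ᵥ g0) ⬝ᵥ (H⁻¹ *ᵥ g)))
    (hI3 : I3 = (α / (2 * n)) * (2 - c * α) * ((H⁻¹ *ᵥ g) ⬝ᵥ H⁻¹ *ᵥ (H⁻¹ *ᵥ g)))
    (hI4 : I4 = α * (2 - c * α) * ((H⁻¹ *ᵥ g0) ⬝ᵥ H⁻¹ *ᵥ (H⁻¹ *ᵥ g))) :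
    F1 - F0 = (S * (1 - μ) / (2 * n * Lstar)) *
      (ℓ / (1 + μ) - (1 / lam) * (I1 + I2 + I3 + I4)) :=
  stmt_7_general H hHsymm g0 g n lam μ S Lstar α ℓ c g1 hg1 v0 v1 hv0 hv1 L0 L1 hL1 F0 F1 hF0 hF1 I1
    I2 I3 I4 hI1 hI2 hI3 hI4
end

section
/- Let H be a symmetric positive definite d×d real matrix with eigenvalues σ_1, …, σ_d, let w_0*, w_1*, w ∈ ℝ^d, and let n > 0, λ > 0, μ ∈ [0,1), S > 0, L* > 0, α ≥ 0, γ ∈ (0,1) be real numbers with c := λ/(1+μ) satisfying 2 − c(σ_i + α) > 0 for every i. Define Σ := (2λL*/(S(1−μ))) · H (H + αI_d)^{−1} (2I_d − c(H + αI_d))^{−1}, and for i ∈ {0,1} the Gaussian density p_i(w) := (2π)^{−d/2} (det Σ)^{−1/2} exp( −½ (w − w_i*)ᵀ Σ^{−1} (w − w_i*) ). Let g_0, g ∈ ℝ^d satisfy w − w_0* = H^{−1} g_0 and w − w_1* = H^{−1}(g_0 + g/n), and set ℓ := (n/2)·( (w − w_1*)ᵀ H (w − w_1*) − (w − w_0*)ᵀ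 H (w − w_0*) ). Define I_1 := (1/n)(1 − cα)·‖H^{−1}g‖², I_2 := 2(1 − cα)·(H^{−1}g_0)ᵀ(H^{−1}g), I_3 := (α/(2n))(2 − cα)·(H^{−1}g)ᵀ H^{−1} (H^{−1}g), and I_4 := α(2 − cα)·(H^{−1}g_0)ᵀ H^{−1} (H^{−1}g). Then γ·p_1(w) / ( γ·p_1(w) + (1−γ)·p_0(w) ) = σ( (S(1−μ)/(2nL*)) · ( ℓ/(1+μ) − (1/λ)(I_1 + I_2 + I_3 + I_4) ) + ln( γ/(1−γ) ) ), where σ(u) = (1 + exp(−u))^{−1} denotes the sigmoid function. -/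
open Matrix

/-- The sigmoid function σ(u) = (1 + exp(−u))⁻¹. -/
noncomputable def sigmoid (u : ℝ) : ℝ := (1 + Real.exp (-u))⁻¹

section aux
variable {d : ℕ} (U : Matrix (Fin d) (Fin d) ℝ)

lemma aux_dot (hVU : star U * U = 1) (y z : Fin d → ℝ) :
    (U *ᵥ y) ⬝ᵥ (U *ᵥ z) = y ⬝ᵥ z := by
  rw [dotProduct_mulVec, ← mulVec_transpose, ← conjTranspose_eq_transpose_of_trivial,
    ← star_eq_conjTranspose, mulVec_mulVec, hVU, one_mulVec]

lemma aux_bil (hVU : star U * U = 1) (v y z : Fin d → ℝ) :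
    (U *ᵥ y) ⬝ᵥ (U * diagonal v * star U) *ᵥ (U *ᵥ z) = ∑ i, v i * (y i * z i) := by
  have hz : star U *ᵥ (U *ᵥ z) = z := by rw [mulVec_mulVec, hVU, one_mulVec]
  rw [← mulVec_mulVec, ← mulVec_mulVec, hz, aux_dot U hVU]
  simp only [dotProduct, mulVec_diagonal]
  exact Finset.sum_congr rfl fun i _ => by ring

lemma aux_mul (hVU : star U * U = 1) (v w : Fin d → ℝ) :
    (U * diagonal v * star U) * (U * diagonal w * star U)
      = U * diagonal (fun i => v i * w i) * star U := by
  calc U * diagonal v * star U * (U * diagonal w * star U)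
      = U * diagonal v * (star U * U) * (diagonal w * star U) := by
        simp only [Matrix.mul_assoc]
    _ = U * (diagonal v * diagonal w) * star U := by
        rw [hVU]; simp only [Matrix.mul_one, Matrix.mul_assoc]
    _ = U * diagonal (fun i => v i * w i) * star U := by
        rw [diagonal_mul_diagonal]

lemma aux_inv (hUV : U * star U = 1) (hVU : star U * U = 1) (v : Fin d → ℝ)
    (hv : ∀ i, v i ≠ 0) :
    (U * diagonal v * star U)⁻¹ = U * diagonal (fun i => (v i)⁻¹) * star U := by
  apply Matrix.inv_eq_right_inv
  rw [aux_mul U hVU]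
  have : (fun i => v i * (v i)⁻¹) = fun _ => (1:ℝ) := by
    funext i; exact mul_inv_cancel₀ (hv i)
  rw [this, ← Matrix.smul_one_eq_diagonal, one_smul, Matrix.mul_one, hUV]

lemma aux_det (hUV : U * star U = 1) (v : Fin d → ℝ) :
    (U * diagonal v * star U).det = ∏ i, v i := by
  have h1 : U.det * (star U).det = 1 := by
    rw [← det_mul, hUV, det_one]
  rw [det_mul, det_mul, det_diagonal, mul_comm U.det, mul_assoc, h1, mul_one]

end aux

set_option maxHeartbeats 1000000 in
/-- Exact optimal membership-inference score for SGD: the posterior probability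
of membership, computed from the Gaussian posteriors p₁ (with the record) and
p₀ (without), is the sigmoid of the IHA score plus the log prior odds. -/
theorem stmt_8 {d : ℕ} (H : Matrix (Fin d) (Fin d) ℝ)
    (hH : H.IsHermitian) (hPD : H.PosDef)
    (w0star w1star w : Fin d → ℝ)
    (n lam μ S Lstar α γ : ℝ)
    (hn : 0 < n) (hlam : 0 < lam) (hμ0 : 0 ≤ μ) (hμ1 : μ < 1)
    (hS : 0 < S) (hLstar : 0 < Lstar) (hα : 0 ≤ α) (hγ0 : 0 < γ) (hγ1 : γ < 1)
    (c : ℝ) (hc : c = lam / (1 + μ))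
    (hgap : ∀ i : Fin d, 0 < 2 - c * (hH.eigenvalues i + α))
    (Sgm : Matrix (Fin d) (Fin d) ℝ)
    (hSgm : Sgm = (2 * lam * Lstar / (S * (1 - μ))) •
      (H * (H + α • (1 : Matrix (Fin d) (Fin d) ℝ))⁻¹ *
        ((2 : ℝ) • (1 : Matrix (Fin d) (Fin d) ℝ) -
          c • (H + α • (1 : Matrix (Fin d) (Fin d) ℝ)))⁻¹))
    (p0 p1 : ℝ)
    (hp0 : p0 = (2 * Real.pi) ^ (-(d : ℝ) / 2) * Sgm.det ^ (-(1 : ℝ) / 2) *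
      Real.exp (-(1 / 2) * ((w - w0star) ⬝ᵥ Sgm⁻¹ *ᵥ (w - w0star))))
    (hp1 : p1 = (2 * Real.pi) ^ (-(d : ℝ) / 2) * Sgm.det ^ (-(1 : ℝ) / 2) *
      Real.exp (-(1 / 2) * ((w - w1star) ⬝ᵥ Sgm⁻¹ *ᵥ (w - w1star))))
    (g0 g : Fin d → ℝ)
    (hg0 : w - w0star = H⁻¹ *ᵥ g0)
    (hg1 : w - w1star = H⁻¹ *ᵥ (g0 + (1 / n) • g))
    (ℓ : ℝ)
    (hℓ : ℓ = (n / 2) * ((w - w1star) ⬝ᵥ H *ᵥ (w - w1star) -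
      (w - w0star) ⬝ᵥ H *ᵥ (w - w0star)))
    (I1 I2 I3 I4 : ℝ)
    (hI1 : I1 = (1 / n) * (1 - c * α) * ((H⁻¹ *ᵥ g) ⬝ᵥ (H⁻¹ *ᵥ g)))
    (hI2 : I2 = 2 * (1 - c * α) * ((H⁻¹ *ᵥ g0) ⬝ᵥ (H⁻¹ *ᵥ g)))
    (hI3 : I3 = (α / (2 * n)) * (2 - c * α) * ((H⁻¹ *ᵥ g) ⬝ᵥ H⁻¹ *ᵥ (H⁻¹ *ᵥ g)))
    (hI4 : I4 = α * (2 - c * α) * ((H⁻¹ *ᵥ g0) ⬝ᵥ H⁻¹ *ᵥ (H⁻¹ *ᵥ g))) :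
    γ * p1 / (γ * p1 + (1 - γ) * p0) =
      sigmoid ((S * (1 - μ) / (2 * n * Lstar)) *
        (ℓ / (1 + μ) - (1 / lam) * (I1 + I2 + I3 + I4)) +
        Real.log (γ / (1 - γ))) := by
  have h1μ : (0:ℝ) < 1 - μ := by linarith
  have h1μ' : (0:ℝ) < 1 + μ := by linarith
  set e : Fin d → ℝ := hH.eigenvalues with he
  have hepos : ∀ i, 0 < e i := fun i => hPD.eigenvalues_pos i
  set U : Matrix (Fin d) (Fin d) ℝ := (hH.eigenvectorUnitary : Matrix (Fin d) (Fin d) ℝ)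
    with hUdef
  have hUV : U * star U = 1 := (Matrix.mem_unitaryGroup_iff).mp hH.eigenvectorUnitary.2
  have hVU : star U * U = 1 := (Matrix.mem_unitaryGroup_iff').mp hH.eigenvectorUnitary.2
  have hspec : H = U * diagonal e * star U := by
    simpa using hH.spectral_theorem
  -- the constant r
  set r : ℝ := 2 * lam * Lstar / (S * (1 - μ)) with hr
  have hrpos : 0 < r := by positivity
  -- eigen data positivity
  have heα : ∀ i, 0 < e i + α := fun i => by have := hepos i; linarith
  have hM : ∀ i, 0 < 2 - c * (e i + α) := hgap
  -- the Σ eigenvalues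
  set f : Fin d → ℝ := fun i => r * (e i * ((e i + α)⁻¹ * (2 - c * (e i + α))⁻¹)) with hf
  have hfpos : ∀ i, 0 < f i := fun i => by
    have h1 := hepos i; have h2 := heα i; have h3 := hM i
    rw [hf]; positivity
  -- matrix identities
  have hconst : ∀ β : ℝ, β • (1 : Matrix (Fin d) (Fin d) ℝ)
      = U * diagonal (fun _ => β) * star U := by
    intro β
    rw [Matrix.smul_one_eq_diagonal]
    calc diagonal (fun _ : Fin d => β)
        = (U * star U) * diagonal (fun _ => β) := by rw [hUV, Matrix.one_mul]
      _ = U * diagonal (fun _ => β) * star U := by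
          rw [Matrix.mul_assoc, Matrix.mul_assoc]
          congr 1
          rw [← Matrix.smul_one_eq_diagonal]
          simp [Matrix.mul_smul, Matrix.smul_mul]
  have hCA : H + α • (1 : Matrix (Fin d) (Fin d) ℝ)
      = U * diagonal (fun i => e i + α) * star U := by
    rw [hspec, hconst α, ← Matrix.add_mul, ← Matrix.mul_add, diagonal_add]
  have hsmulC : ∀ (β : ℝ) (v : Fin d → ℝ),
      β • (U * diagonal v * star U) = U * diagonal (fun i => β * v i) * star U := by
    intro β v
    have h1 : β • (U * diagonal v * star U) = U * (β • diagonal v) * star U := by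
      simp [Matrix.smul_mul, Matrix.mul_smul]
    rw [h1, ← diagonal_smul]
    congr 1
  have hCM : (2 : ℝ) • (1 : Matrix (Fin d) (Fin d) ℝ)
        - c • (H + α • (1 : Matrix (Fin d) (Fin d) ℝ))
      = U * diagonal (fun i => 2 - c * (e i + α)) * star U := by
    rw [hCA, hconst 2, hsmulC c, ← Matrix.sub_mul, ← Matrix.mul_sub, diagonal_sub]
  have hSgmC : Sgm = U * diagonal f * star U := by
    rw [hSgm, hCM, hCA,
      aux_inv U hUV hVU _ (fun i => (heα i).ne'),
      aux_inv U hUV hVU _ (fun i => (hM i).ne'),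
      hspec, aux_mul U hVU, aux_mul U hVU, hsmulC]
    congr 1
    congr 1
    apply congrArg
    funext i
    simp only [hf]
    ring
  have hdet : Sgm.det = ∏ i, f i := by rw [hSgmC, aux_det U hUV]
  have hdetpos : 0 < Sgm.det := by
    rw [hdet]; exact Finset.prod_pos fun i _ => hfpos i
  have hSgmInv : Sgm⁻¹ = U * diagonal (fun i => (f i)⁻¹) * star U := by
    rw [hSgmC, aux_inv U hUV hVU _ (fun i => (hfpos i).ne')]
  have hHInv : H⁻¹ = U * diagonal (fun i => (e i)⁻¹) * star U := by
    rw [hspec, aux_inv U hUV hVU _ (fun i => (hepos i).ne')]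
  -- vectors
  set a : Fin d → ℝ := star U *ᵥ g0 with ha
  set b : Fin d → ℝ := star U *ᵥ g with hb
  have hdiagvec : ∀ (v x : Fin d → ℝ),
      (U * diagonal v * star U) *ᵥ x = U *ᵥ (fun i => v i * (star U *ᵥ x) i) := by
    intro v x
    rw [← mulVec_mulVec, ← mulVec_mulVec]
    have hdv : diagonal v *ᵥ (star U *ᵥ x) = fun i => v i * (star U *ᵥ x) i := by
      funext i; rw [mulVec_diagonal]
    rw [hdv]
  have hw0 : w - w0star = U *ᵥ (fun i => (e i)⁻¹ * a i) := by
    rw [hg0, hHInv, hdiagvec]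
  have hw1 : w - w1star = U *ᵥ (fun i => (e i)⁻¹ * (a i + (1/n) * b i)) := by
    rw [hg1, hHInv, hdiagvec]
    congr 1
    funext i
    simp [mulVec_add, mulVec_smul, ha, hb, Pi.smul_apply, smul_eq_mul]
  have hHg : H⁻¹ *ᵥ g = U *ᵥ (fun i => (e i)⁻¹ * b i) := by
    rw [hHInv, hdiagvec]
  have hHg0 : H⁻¹ *ᵥ g0 = U *ᵥ (fun i => (e i)⁻¹ * a i) := by
    rw [hHInv, hdiagvec]
  -- scalar sums
  have hq0 : (w - w0star) ⬝ᵥ Sgm⁻¹ *ᵥ (w - w0star)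
      = ∑ i, (f i)⁻¹ * (((e i)⁻¹ * a i) * ((e i)⁻¹ * a i)) := by
    rw [hw0, hSgmInv, aux_bil U hVU]
  have hq1 : (w - w1star) ⬝ᵥ Sgm⁻¹ *ᵥ (w - w1star)
      = ∑ i, (f i)⁻¹ * (((e i)⁻¹ * (a i + (1/n) * b i)) * ((e i)⁻¹ * (a i + (1/n) * b i))) := by
    rw [hw1, hSgmInv, aux_bil U hVU]
  have hℓs : ℓ = (n/2) * (∑ i, (e i * (((e i)⁻¹ * (a i + (1/n) * b i)) * ((e i)⁻¹ * (a i + (1/n) * b i)))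
      - e i * (((e i)⁻¹ * a i) * ((e i)⁻¹ * a i)))) := by
    rw [hℓ, hw0, hw1]
    conv_lhs => rw [hspec]
    rw [aux_bil U hVU, aux_bil U hVU, ← Finset.sum_sub_distrib]
  have hI1s : I1 = (1/n) * (1 - c * α) * ∑ i, ((e i)⁻¹ * b i) * ((e i)⁻¹ * b i) := by
    rw [hI1, hHg, aux_dot U hVU]
    simp only [dotProduct]
  have hI2s : I2 = 2 * (1 - c * α) * ∑ i, ((e i)⁻¹ * a i) * ((e i)⁻¹ * b i) := by
    rw [hI2, hHg, hHg0, aux_dot U hVU]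
    simp only [dotProduct]
  have hI3s : I3 = (α / (2 * n)) * (2 - c * α) * ∑ i, (e i)⁻¹ * (((e i)⁻¹ * b i) * ((e i)⁻¹ * b i)) := by
    rw [hI3, hHg, hHInv, aux_bil U hVU]
  have hI4s : I4 = α * (2 - c * α) * ∑ i, (e i)⁻¹ * (((e i)⁻¹ * a i) * ((e i)⁻¹ * b i)) := by
    rw [hI4, hHg, hHg0, hHInv, aux_bil U hVU]
  -- the key scalar identity
  have key : (S * (1 - μ) / (2 * n * Lstar)) * (ℓ / (1 + μ) - (1 / lam) * (I1 + I2 + I3 + I4))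
      = ((∑ i, (f i)⁻¹ * (((e i)⁻¹ * a i) * ((e i)⁻¹ * a i)))
        - (∑ i, (f i)⁻¹ * (((e i)⁻¹ * (a i + (1/n) * b i)) * ((e i)⁻¹ * (a i + (1/n) * b i))))) / 2 := by
    rw [hℓs, hI1s, hI2s, hI3s, hI4s]
    rw [Finset.mul_sum, Finset.mul_sum, Finset.mul_sum, Finset.mul_sum, Finset.mul_sum,
      Finset.sum_div, ← Finset.sum_add_distrib, ← Finset.sum_add_distrib,
      ← Finset.sum_add_distrib, Finset.mul_sum, ← Finset.sum_sub_distrib, Finset.mul_sum,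
      ← Finset.sum_sub_distrib, Finset.sum_div]
    refine Finset.sum_congr rfl fun i _ => ?_
    have hE : e i ≠ 0 := (hepos i).ne'
    have hEα : e i + α ≠ 0 := (heα i).ne'
    have hMi : 2 - c * (e i + α) ≠ 0 := (hM i).ne'
    have hfi : f i ≠ 0 := (hfpos i).ne'
    simp only [hf, hr, hc]
    field_simp
    ring
  -- assemble
  set q0e := (w - w0star) ⬝ᵥ Sgm⁻¹ *ᵥ (w - w0star) with hq0e
  set q1e := (w - w1star) ⬝ᵥ Sgm⁻¹ *ᵥ (w - w1star) with hq1e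
  set T : ℝ := (S * (1 - μ) / (2 * n * Lstar)) *
      (ℓ / (1 + μ) - (1 / lam) * (I1 + I2 + I3 + I4)) with hT
  have keyq : T = (q0e - q1e) / 2 := by rw [hq0, hq1]; exact key
  have hK : 0 < (2 * Real.pi) ^ (-(d : ℝ) / 2) * Sgm.det ^ (-(1:ℝ) / 2) :=
    mul_pos (Real.rpow_pos_of_pos (by positivity) _) (Real.rpow_pos_of_pos hdetpos _)
  have hp0pos : 0 < p0 := by rw [hp0]; exact mul_pos hK (Real.exp_pos _)
  have hp1pos : 0 < p1 := by rw [hp1]; exact mul_pos hK (Real.exp_pos _)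
  have hexpT : Real.exp (-T) * p1 = p0 := by
    rw [hp0, hp1]
    have : Real.exp (-T) * Real.exp (-(1/2) * q1e) = Real.exp (-(1/2) * q0e) := by
      rw [← Real.exp_add]
      congr 1
      rw [keyq]; ring
    calc Real.exp (-T) * ((2 * Real.pi) ^ (-(d : ℝ) / 2) * Sgm.det ^ (-(1:ℝ) / 2) *
          Real.exp (-(1/2) * q1e))
        = (2 * Real.pi) ^ (-(d : ℝ) / 2) * Sgm.det ^ (-(1:ℝ) / 2) *
          (Real.exp (-T) * Real.exp (-(1/2) * q1e)) := by ring
      _ = (2 * Real.pi) ^ (-(d : ℝ) / 2) * Sgm.det ^ (-(1:ℝ) / 2) *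
          Real.exp (-(1/2) * q0e) := by rw [this]
  have h1γ : (0:ℝ) < 1 - γ := by linarith
  have hlogexp : Real.exp (-(T + Real.log (γ / (1 - γ))))
      = Real.exp (-T) * ((1 - γ) / γ) := by
    rw [neg_add, Real.exp_add]
    congr 1
    rw [Real.exp_neg, Real.exp_log (by positivity), inv_div]
  rw [sigmoid, hlogexp, ← hexpT]
  have hEpos : 0 < Real.exp (-T) := Real.exp_pos _
  have hden : (0:ℝ) < γ * p1 + (1 - γ) * (Real.exp (-T) * p1) :=
    add_pos (mul_pos hγ0 hp1pos) (mul_pos h1γ (mul_pos hEpos hp1pos))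
  have hden2 : (0:ℝ) < 1 + Real.exp (-T) * ((1 - γ) / γ) := by positivity
  rw [div_eq_iff hden.ne', inv_mul_eq_div, eq_div_iff hden2.ne']
  field_simp
end
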